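/- Let c > 1 and let z be a real number with z > c + 2. Then ∫_{c−2}^{c+2} [√(4−(s−c)²)/(2π(1+cs))] / (z − s) ds + (1 − 1/c²)/(z + 1/c) = (c + z − √((z−c)² − 4)) / (2(1+cz)). -/

import Mathlib

/-!
After the shift `s = t + c` the absolutely continuous part is the semicircle density
`√(4 - t²) / 2π` divided by `1 + c (t + c)`, and partial fractions turn
`1 / ((1 + c (t + c)) (z - c - t))` into a difference of two Cauchy kernels, with poles
`z - c > 2` and `-(c + 1/c) < -2`. The Cauchy transform of the semicircle,
`∫ √(4 - t²) / (x - t) dt = π (x ∓ √(x² - 4))` for `±x > 2`, follows from the primitive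
`x arcsin (t/2) - √(4 - t²) - √(x² - 4) arcsin ((x t - 4) / (2 (x - t)))`,
whose last argument runs from `-1` to `1` as `t` runs over `[-2, 2]`.
At the pole `-(c + 1/c)` the square root is `c - 1/c`, so that pole contributes
`1 / (c (1 + c z))`, which with the atom's `(c² - 1) / (c (1 + c z))` makes `c / (1 + c z)`.
-/

open Real Set intervalIntegral MeasureTheory

section SemicircleCauchyIntegral

variable {x t : ℝ}

lemma hasDerivAt_arcsin_half (ht : t ∈ Ioo (-2 : ℝ) 2) :
    HasDerivAt (fun t => arcsin (t / 2)) (1 / √(4 - t ^ 2)) t := by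
  have h4t : 0 < 4 - t ^ 2 := by nlinarith [ht.1, ht.2]
  have h := (hasDerivAt_arcsin (by intro h; linarith [ht.1]) (by intro h; linarith [ht.2])).comp t
    ((hasDerivAt_id' t).div_const 2)
  refine h.congr_deriv ?_
  rw [show (1 : ℝ) - (t / 2) ^ 2 = (√(4 - t ^ 2) / 2) ^ 2 by
    rw [div_pow, div_pow, sq_sqrt h4t.le]; ring, sqrt_sq (by positivity)]
  field_simp [(sqrt_pos.mpr h4t).ne']

lemma hasDerivAt_sqrt_four_sub_sq (ht : t ∈ Ioo (-2 : ℝ) 2) :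
    HasDerivAt (fun t => √(4 - t ^ 2)) (-t / √(4 - t ^ 2)) t := by
  have h4t : 0 < 4 - t ^ 2 := by nlinarith [ht.1, ht.2]
  refine ((hasDerivAt_sqrt h4t.ne').comp t ((hasDerivAt_pow 2 t).const_sub 4)).congr_deriv ?_
  field_simp [(sqrt_pos.mpr h4t).ne']
  ring

lemma hasDerivAt_arcsin_moebius (hx : 2 < x) (ht : t ∈ Ioo (-2 : ℝ) 2) :
    HasDerivAt (fun t => arcsin ((x * t - 4) / (2 * (x - t))))
      (√(x ^ 2 - 4) / ((x - t) * √(4 - t ^ 2))) t := by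
  have hxt : 0 < x - t := by linarith [ht.2]
  have h4t : 0 < 4 - t ^ 2 := by nlinarith [ht.1, ht.2]
  have hx4 : 0 < x ^ 2 - 4 := by nlinarith
  set u := (x * t - 4) / (2 * (x - t))
  have hsqrt : √(1 - u ^ 2) = √(4 - t ^ 2) * √(x ^ 2 - 4) / (2 * (x - t)) := by
    rw [← sqrt_sq (by positivity : 0 ≤ √(4 - t ^ 2) * √(x ^ 2 - 4) / (2 * (x - t)))]
    congr 1
    simp only [div_pow, mul_pow, sq_sqrt h4t.le, sq_sqrt hx4.le]
    unfold u
    field_simp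
    ring
  have hu : 0 < 1 - u ^ 2 := sqrt_pos.mp (by rw [hsqrt]; positivity)
  have du : HasDerivAt (fun t => (x * t - 4) / (2 * (x - t)))
      ((x ^ 2 - 4) / (2 * (x - t) ^ 2)) t := by
    refine ((((hasDerivAt_id' t).const_mul x).sub_const 4).div
      (((hasDerivAt_id' t).const_sub x).const_mul 2) (by positivity)).congr_deriv ?_
    field_simp
    ring
  refine ((hasDerivAt_arcsin (by nlinarith) (by nlinarith)).comp t du).congr_deriv ?_
  rw [hsqrt]
  field_simp [(sqrt_pos.mpr h4t).ne', (sqrt_pos.mpr hx4).ne']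
  rw [sq_sqrt hx4.le]

lemma hasDerivAt_semicircle_cauchy_primitive (hx : 2 < x) (ht : t ∈ Ioo (-2 : ℝ) 2) :
    HasDerivAt (fun t => x * arcsin (t / 2) - √(4 - t ^ 2)
        - √(x ^ 2 - 4) * arcsin ((x * t - 4) / (2 * (x - t))))
      (√(4 - t ^ 2) / (x - t)) t := by
  have hxt : 0 < x - t := by linarith [ht.2]
  have h4t : 0 < 4 - t ^ 2 := by nlinarith [ht.1, ht.2]
  refine ((((hasDerivAt_arcsin_half ht).const_mul x).sub (hasDerivAt_sqrt_four_sub_sq ht)).sub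
    ((hasDerivAt_arcsin_moebius hx ht).const_mul _)).congr_deriv ?_
  field_simp
  rw [sq_sqrt h4t.le, sq_sqrt (by nlinarith : (0 : ℝ) ≤ x ^ 2 - 4)]
  ring

lemma continuousOn_sqrt_four_sub_sq_div_sub (hx : x ∉ Icc (-2 : ℝ) 2) :
    ContinuousOn (fun t => √(4 - t ^ 2) / (x - t)) (Icc (-2) 2) :=
  (continuous_const.sub (continuous_pow 2)).continuousOn.sqrt.div
    (continuous_const.sub continuous_id).continuousOn
    fun _ ht => sub_ne_zero.mpr fun h => hx (h ▸ ht)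

lemma intervalIntegrable_sqrt_four_sub_sq_div_sub (hx : x ∉ Icc (-2 : ℝ) 2) :
    IntervalIntegrable (fun t => √(4 - t ^ 2) / (x - t)) volume (-2) 2 :=
  (continuousOn_sqrt_four_sub_sq_div_sub hx).intervalIntegrable_of_Icc (by norm_num)

theorem integral_sqrt_four_sub_sq_div_sub_of_two_lt (hx : 2 < x) :
    ∫ t in (-2 : ℝ)..2, √(4 - t ^ 2) / (x - t) = π * (x - √(x ^ 2 - 4)) := by
  have hcont : ContinuousOn (fun t => x * arcsin (t / 2) - √(4 - t ^ 2)
      - √(x ^ 2 - 4) * arcsin ((x * t - 4) / (2 * (x - t)))) (Icc (-2) 2) := by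
    refine ((continuousOn_const.mul
      (continuous_arcsin.comp (continuous_id.div_const 2)).continuousOn).sub
      (continuous_const.sub (continuous_pow 2)).continuousOn.sqrt).sub
      (continuousOn_const.mul (continuous_arcsin.comp_continuousOn ?_))
    exact ((continuous_const.mul continuous_id).sub continuous_const).continuousOn.div
      (continuous_const.mul (continuous_const.sub continuous_id)).continuousOn
      fun t ht => by nlinarith [ht.2]
  rw [integral_eq_sub_of_hasDerivAt_of_le (by norm_num) hcont
    (fun t ht => hasDerivAt_semicircle_cauchy_primitive hx ht)
    (intervalIntegrable_sqrt_four_sub_sq_div_sub (fun h => by linarith [h.2]))]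
  have hend : (x * 2 - 4) / (2 * (x - 2)) = 1 := by rw [div_eq_iff (by linarith)]; ring
  have hend' : (x * -2 - 4) / (2 * (x - -2)) = -1 := by rw [div_eq_iff (by linarith)]; ring
  rw [hend, hend']
  norm_num
  ring

theorem integral_sqrt_four_sub_sq_div_sub_of_lt_neg_two (hx : x < -2) :
    ∫ t in (-2 : ℝ)..2, √(4 - t ^ 2) / (x - t) = π * (x + √(x ^ 2 - 4)) := by
  have hflip := integral_comp_neg (a := -2) (b := 2) fun t => √(4 - t ^ 2) / (-x - t)
  simp only [neg_neg, neg_sq, sub_neg_eq_add] at hflip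
  rw [integral_sqrt_four_sub_sq_div_sub_of_two_lt (by linarith), neg_sq] at hflip
  calc ∫ t in (-2 : ℝ)..2, √(4 - t ^ 2) / (x - t)
      = -∫ t in (-2 : ℝ)..2, √(4 - t ^ 2) / (-x + t) := by
        rw [← intervalIntegral.integral_neg]
        congr 1 with t
        rw [← div_neg, neg_add, neg_neg, ← sub_eq_add_neg]
    _ = π * (x + √(x ^ 2 - 4)) := by rw [hflip]; ring

end SemicircleCauchyIntegral

theorem stmt_9 (c z : ℝ) (hc : 1 < c) (hz : c + 2 < z) :
    (∫ s in (c - 2)..(c + 2),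
        (Real.sqrt (4 - (s - c) ^ 2) / (2 * Real.pi * (1 + c * s))) / (z - s))
      + (1 - 1 / c ^ 2) / (z + 1 / c)
    = (c + z - Real.sqrt ((z - c) ^ 2 - 4)) / (2 * (1 + c * z)) := by
  have hc0 : 0 < c := by linarith
  have hcz : 0 < 1 + c * z := by nlinarith
  have hpole : -(c + 1 / c) < -2 := by
    have : 0 < (c - 1) ^ 2 / c := by positivity
    have : (c - 1) ^ 2 / c = c + 1 / c - 2 := by field_simp; ring
    linarith
  have hsqrt_pole : √((-(c + 1 / c)) ^ 2 - 4) = c - 1 / c := by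
    rw [show (-(c + 1 / c)) ^ 2 - 4 = (c - 1 / c) ^ 2 by field_simp; ring,
      sqrt_sq (by rw [sub_nonneg, div_le_iff₀ hc0]; nlinarith)]
  have hshift := integral_comp_add_right (a := -2) (b := 2)
    (fun s => √(4 - (s - c) ^ 2) / (2 * π * (1 + c * s)) / (z - s)) c
  simp only [add_sub_cancel_right] at hshift
  have hpartial : EqOn (fun t => √(4 - t ^ 2) / (2 * π * (1 + c * (t + c))) / (z - (t + c)))
      (fun t => (2 * π * (1 + c * z))⁻¹ *
        (√(4 - t ^ 2) / (z - c - t) - √(4 - t ^ 2) / (-(c + 1 / c) - t))) (uIcc (-2) 2) := by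
    intro t ht
    rw [uIcc_of_le (by norm_num)] at ht
    have h1 : 1 + c * (t + c) ≠ 0 := by nlinarith [ht.1]
    have h2 : z - c - t ≠ 0 := by linarith [ht.2]
    have h2' : z - (t + c) ≠ 0 := by linarith [ht.2]
    dsimp only
    rw [show -(c + 1 / c) - t = -(1 + c * (t + c)) / c by field_simp; ring]
    field_simp
    ring
  rw [show c - 2 = -2 + c by ring, show c + 2 = 2 + c by ring, ← hshift,
    integral_congr hpartial, intervalIntegral.integral_const_mul,
    integral_sub (intervalIntegrable_sqrt_four_sub_sq_div_sub fun h => by linarith [h.2])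
      (intervalIntegrable_sqrt_four_sub_sq_div_sub fun h => by linarith [h.1]),
    integral_sqrt_four_sub_sq_div_sub_of_two_lt (by linarith),
    integral_sqrt_four_sub_sq_div_sub_of_lt_neg_two hpole, hsqrt_pole]
  rw [show z + 1 / c = (1 + c * z) / c by field_simp; ring]
  field_simp [hcz.ne', pi_pos.ne']
  ring
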